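/- Let G and G' be groups with identity elements e and e' respectively, Q a nonempty set, and f : G → G' a bijective anti-homomorphism, i.e., f(xy) = f(y)f(x) for all x, y ∈ G. Let μ : G × Q → [0,1] be an α-Q-fuzzy subgroup of G, and let ν : G' × Q → [0,1] be its image under f, characterized by ν(f(x), q) = μ(x, q) for all x ∈ G and q ∈ Q. If the set X = { x ∈ G : μ(x, q) = μ(e, q) for all q ∈ Q } is abelian (any two of its elements commute), then the set X' = { y ∈ G' : ν(y, q) = ν(e', q) for all q ∈ Q } is abelian; that is, the image of an α-Q-fuzzy abelian subgroup under a bijective anti-homomorphism is an α-Q-fuzzy abelian subgroup. -/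

import Mathlib

def IsAlphaQFuzzySubgroup {G Q : Type*} [Group G] (μ : G → Q → ℝ) : Prop :=
  (∀ x y q, μ (x * y) q ≥ min (μ x q) (μ y q)) ∧ (∀ x q, μ x⁻¹ q ≥ μ x q)

section AntiHom

variable {M N : Type*} {f : M → N}

theorem map_one_of_map_mul_rev [MulOneClass M] [Group N]
    (hanti : ∀ x y : M, f (x * y) = f y * f x) : f 1 = 1 := by
  simpa using hanti 1 1

theorem Commute.map_of_map_mul_rev [Mul M] [Mul N]
    (hanti : ∀ x y : M, f (x * y) = f y * f x) {a b : M} (h : Commute a b) :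
    Commute (f a) (f b) := by
  rw [Commute, SemiconjBy, ← hanti, ← hanti, h.eq]

end AntiHom

-- The set `X` of the paper.
def peakSet {G Q : Type*} [One G] (μ : G → Q → ℝ) : Set G :=
  {x | ∀ q, μ x q = μ 1 q}

theorem preimage_peakSet {G G' Q : Type*} [One G] [One G'] {f : G → G'} (hf1 : f 1 = 1)
    {μ : G → Q → ℝ} {ν : G' → Q → ℝ} (hνμ : ∀ x q, ν (f x) q = μ x q) :
    f ⁻¹' peakSet ν = peakSet μ := by
  ext x
  simp only [Set.mem_preimage, peakSet, Set.mem_ofPred_eq, ← hf1, hνμ]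

theorem image_abelian_general {G G' Q : Type*} [Group G] [Group G']
    (f : G → G') (hbij : Function.Bijective f)
    (hanti : ∀ x y : G, f (x * y) = f y * f x)
    (μ : G → Q → ℝ)
    (ν : G' → Q → ℝ)
    (hνdef : ∀ (x : G) (q : Q), ν (f x) q = μ x q)
    (habel : ∀ a ∈ {x : G | ∀ q : Q, μ x q = μ (1 : G) q},
      ∀ b ∈ {x : G | ∀ q : Q, μ x q = μ (1 : G) q}, a * b = b * a) :
    ∀ a ∈ {y : G' | ∀ q : Q, ν y q = ν (1 : G') q},
      ∀ b ∈ {y : G' | ∀ q : Q, ν y q = ν (1 : G') q}, a * b = b * a := by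
  have hpre : f ⁻¹' peakSet ν = peakSet μ :=
    preimage_peakSet (map_one_of_map_mul_rev hanti) hνdef
  intro a ha b hb
  obtain ⟨x, rfl⟩ := hbij.surjective a
  obtain ⟨y, rfl⟩ := hbij.surjective b
  have hx : x ∈ peakSet μ := hpre ▸ ha
  have hy : y ∈ peakSet μ := hpre ▸ hb
  exact (Commute.map_of_map_mul_rev hanti (habel x hx y hy)).eq

/-- The image of an α-Q-fuzzy abelian subgroup under a bijective
anti-homomorphism is α-Q-fuzzy abelian: if
`X = {x ∈ G | μ(x,q) = μ(e,q) ∀q}` is abelian, then so is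
`X' = {y ∈ G' | ν(y,q) = ν(e',q) ∀q}` where `ν(f(x),q) = μ(x,q)`. -/
theorem image_abelian {G G' Q : Type*} [Group G] [Group G'] [Nonempty Q]
    (f : G → G') (hbij : Function.Bijective f)
    (hanti : ∀ x y : G, f (x * y) = f y * f x)
    (μ : G → Q → ℝ)
    (h01 : ∀ x q, μ x q ∈ Set.Icc (0 : ℝ) 1)
    (hμ : IsAlphaQFuzzySubgroup μ)
    (ν : G' → Q → ℝ)
    (hνdef : ∀ (x : G) (q : Q), ν (f x) q = μ x q)
    (habel : ∀ a ∈ {x : G | ∀ q : Q, μ x q = μ (1 : G) q},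
      ∀ b ∈ {x : G | ∀ q : Q, μ x q = μ (1 : G) q}, a * b = b * a) :
    ∀ a ∈ {y : G' | ∀ q : Q, ν y q = ν (1 : G') q},
      ∀ b ∈ {y : G' | ∀ q : Q, ν y q = ν (1 : G') q}, a * b = b * a :=
  image_abelian_general f hbij hanti μ ν hνdef habel
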